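/- arXiv:1003.2945 — 5 statements merged into one kernel-verified Lean document; each statement's English description precedes it below -/
import Mathlib

section
/- Let m ≥ 2 be an integer, let G : [0,∞) → ℝ be continuous with G(t) ≥ 0 for all t ≥ 0, and let h : [0,∞) → ℝ be twice continuously differentiable with h'' = G·h on [0,∞), h(0) = 0 and h'(0) = 1. Let l > 0, let u : [0,l] → ℝ be C², and let φ : (0,l] → ℝ be C¹ and satisfy the Riccati inequality φ'(t) + φ(t)²/(m−1) ≤ (m−1)·G(t) + u''(t) for every t ∈ (0,l], together with h(t)²·φ(t) → 0 as t → 0⁺. Then for every r ∈ (0,l] one has h(r)²·φ(r) ≤ (m−1)·h(r)·h'(r) + ∫₀ʳ h(t)²·u''(t) dt. -/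
/-!
The quantity `F = h²φ - (m-1) h h' - ∫₀ᵗ h² u''` is nonincreasing on `(0, l]`: substituting
`h h'' = G h²` and the Riccati inequality into `F'` and completing the square gives
`F' ≤ -(h φ - (m-1) h')² / (m-1) ≤ 0`. Since `h(0) = 0` and `h² φ → 0`, `F → 0` at `0⁺`,
hence `F ≤ 0`.
-/

open Set Filter Topology MeasureTheory

theorem AntitoneOn.le_of_tendsto_nhdsGT {f : ℝ → ℝ} {a b c : ℝ} (hf : AntitoneOn f (Ioc a b))
    (hlim : Tendsto f (𝓝[>] a) (𝓝 c)) (hab : a < b) : f b ≤ c :=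
  ge_of_tendsto hlim <| by
    filter_upwards [Ioc_mem_nhdsGT hab] with x hx
    exact hf hx (right_mem_Ioc.2 hab) hx.2

theorem ContinuousOn.continuousOn_primitive_Icc {g : ℝ → ℝ} {a b : ℝ} (hab : a ≤ b)
    (hg : ContinuousOn g (Icc a b)) : ContinuousOn (fun x => ∫ s in a..x, g s) (Icc a b) := by
  have hint : IntegrableOn g (uIcc a b) volume := by
    rw [uIcc_of_le hab]
    exact hg.integrableOn_Icc
  simpa only [uIcc_of_le hab] using intervalIntegral.continuousOn_primitive_interval hint

theorem ContinuousOn.hasDerivAt_primitive_of_mem_Ioo {g : ℝ → ℝ} {a b t : ℝ}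
    (hg : ContinuousOn g (Icc a b)) (ht : t ∈ Ioo a b) :
    HasDerivAt (fun x => ∫ s in a..x, g s) (g t) t :=
  intervalIntegral.integral_hasDerivAt_right
    ((hg.mono (Icc_subset_Icc_right ht.2.le)).intervalIntegrable_of_Icc ht.1.le)
    ((hg.mono Ioo_subset_Icc_self).stronglyMeasurableAtFilter isOpen_Ioo t ht)
    (hg.continuousAt (Icc_mem_nhds ht.1 ht.2))

theorem riccati_comparison_deriv_nonpos {a x y p q G g : ℝ} (ha : 0 < a)
    (hR : q + p ^ 2 / a ≤ a * G + g) :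
    2 * x * y * p + x ^ 2 * q - a * (y ^ 2 + x * (G * x)) - x ^ 2 * g ≤ 0 := by
  have hsq : 0 ≤ (x * p - a * y) ^ 2 / a := by positivity
  have hq : x ^ 2 * q ≤ x ^ 2 * (a * G + g - p ^ 2 / a) := by gcongr; linarith
  have hcomplete :
      2 * x * y * p - x ^ 2 * (p ^ 2 / a) - a * y ^ 2 = -((x * p - a * y) ^ 2 / a) := by
    field_simp
    ring
  linarith

noncomputable def comparisonGap (a : ℝ) (h h' φ g : ℝ → ℝ) (t : ℝ) : ℝ :=
  h t ^ 2 * φ t - a * h t * h' t - ∫ s in 0..t, h s ^ 2 * g s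

section comparisonGap

variable {a r : ℝ} {h h' φ g : ℝ → ℝ}

theorem hasDerivAt_comparisonGap {h'' φ' : ℝ → ℝ} {t : ℝ}
    (hg : ContinuousOn (fun s => h s ^ 2 * g s) (Icc 0 r)) (ht : t ∈ Ioo 0 r)
    (hh : HasDerivAt h (h' t) t) (hh' : HasDerivAt h' (h'' t) t) (hφ : HasDerivAt φ (φ' t) t) :
    HasDerivAt (comparisonGap a h h' φ g)
      (2 * h t * h' t * φ t + h t ^ 2 * φ' t - a * (h' t ^ 2 + h t * h'' t) - h t ^ 2 * g t) t :=
  ((((hh.pow 2).mul hφ).sub ((hh.const_mul a).mul hh')).sub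
    (hg.hasDerivAt_primitive_of_mem_Ioo ht)).congr_deriv <| by
      simp only [Pi.pow_apply]
      push_cast
      ring

theorem continuousOn_comparisonGap (hr : 0 ≤ r) (hh : ContinuousOn h (Icc 0 r))
    (hh' : ContinuousOn h' (Icc 0 r)) (hφ : ContinuousOn φ (Ioc 0 r))
    (hg : ContinuousOn (fun s => h s ^ 2 * g s) (Icc 0 r)) :
    ContinuousOn (comparisonGap a h h' φ g) (Ioc 0 r) :=
  ((((hh.mono Ioc_subset_Icc_self).pow 2).mul hφ).sub
    ((continuousOn_const.mul hh).mul hh' |>.mono Ioc_subset_Icc_self)).sub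
    ((hg.continuousOn_primitive_Icc hr).mono Ioc_subset_Icc_self)

theorem tendsto_comparisonGap (hr : 0 < r) (hh : ContinuousOn h (Icc 0 r)) (hh0 : h 0 = 0)
    (hh' : ContinuousOn h' (Icc 0 r)) (hg : ContinuousOn (fun s => h s ^ 2 * g s) (Icc 0 r))
    (hlim : Tendsto (fun t => h t ^ 2 * φ t) (𝓝[>] 0) (𝓝 0)) :
    Tendsto (comparisonGap a h h' φ g) (𝓝[>] 0) (𝓝 0) := by
  have hcont : ContinuousWithinAt (fun t => a * h t * h' t + ∫ s in 0..t, h s ^ 2 * g s)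
      (Ioi 0) 0 :=
    (((continuousOn_const.mul hh).mul hh').add (hg.continuousOn_primitive_Icc hr.le) 0
      (left_mem_Icc.2 hr.le)).mono_of_mem_nhdsWithin (Icc_mem_nhdsGT hr)
  convert hlim.sub hcont.tendsto using 2
  · rw [comparisonGap, sub_sub]
  · simp [hh0]

theorem sq_mul_le_of_riccati {G h'' φ' : ℝ → ℝ} (ha : 0 < a) (hr : 0 < r)
    (hh : ContinuousOn h (Icc 0 r)) (hh' : ContinuousOn h' (Icc 0 r))
    (hφ : ContinuousOn φ (Ioc 0 r)) (hg : ContinuousOn g (Icc 0 r))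
    (hh_deriv : ∀ t ∈ Ioo 0 r, HasDerivAt h (h' t) t)
    (hh'_deriv : ∀ t ∈ Ioo 0 r, HasDerivAt h' (h'' t) t)
    (hφ_deriv : ∀ t ∈ Ioo 0 r, HasDerivAt φ (φ' t) t)
    (hode : ∀ t ∈ Ioo 0 r, h'' t = G t * h t) (hh0 : h 0 = 0)
    (hR : ∀ t ∈ Ioo 0 r, φ' t + φ t ^ 2 / a ≤ a * G t + g t)
    (hlim : Tendsto (fun t => h t ^ 2 * φ t) (𝓝[>] 0) (𝓝 0)) :
    h r ^ 2 * φ r ≤ a * h r * h' r + ∫ t in 0..r, h t ^ 2 * g t := by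
  have hg' : ContinuousOn (fun s => h s ^ 2 * g s) (Icc 0 r) := (hh.pow 2).mul hg
  have hanti : AntitoneOn (comparisonGap a h h' φ g) (Ioc 0 r) := by
    refine antitoneOn_of_hasDerivWithinAt_nonpos (convex_Ioc 0 r) (f' := fun t =>
      2 * h t * h' t * φ t + h t ^ 2 * φ' t - a * (h' t ^ 2 + h t * h'' t) - h t ^ 2 * g t)
      (continuousOn_comparisonGap hr.le hh hh' hφ hg') (fun t ht => ?_) (fun t ht => ?_) <;>
      rw [interior_Ioc] at ht
    · exact (hasDerivAt_comparisonGap hg' ht (hh_deriv t ht) (hh'_deriv t ht)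
        (hφ_deriv t ht)).hasDerivWithinAt
    · rw [hode t ht]
      exact riccati_comparison_deriv_nonpos ha (hR t ht)
  have hgap := hanti.le_of_tendsto_nhdsGT (tendsto_comparisonGap hr hh hh0 hh' hg' hlim) hr
  rw [comparisonGap] at hgap
  linarith

end comparisonGap

theorem stmt_0_general
    (m : ℕ) (hm : 2 ≤ m)
    (G h h' h'' : ℝ → ℝ)
    (hhderiv : ∀ t ∈ Set.Ici (0:ℝ), HasDerivWithinAt h (h' t) (Set.Ici 0) t)
    (hh'deriv : ∀ t ∈ Set.Ici (0:ℝ), HasDerivWithinAt h' (h'' t) (Set.Ici 0) t)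
    (hode : ∀ t ≥ (0:ℝ), h'' t = G t * h t)
    (hh0 : h 0 = 0)
    (l : ℝ)
    (u'' : ℝ → ℝ)
    (hu''cont : ContinuousOn u'' (Set.Icc 0 l))
    (φ φ' : ℝ → ℝ)
    (hφderiv : ∀ t ∈ Set.Ioc (0:ℝ) l, HasDerivWithinAt φ (φ' t) (Set.Ioc 0 l) t)
    (hRiccati : ∀ t ∈ Set.Ioc (0:ℝ) l,
      φ' t + φ t ^ 2 / ((m : ℝ) - 1) ≤ ((m : ℝ) - 1) * G t + u'' t)
    (hlim : Filter.Tendsto (fun t => h t ^ 2 * φ t)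
      (nhdsWithin 0 (Set.Ioi 0)) (nhds 0)) :
    ∀ r ∈ Set.Ioc (0:ℝ) l,
      h r ^ 2 * φ r ≤ ((m : ℝ) - 1) * h r * h' r
        + ∫ t in (0:ℝ)..r, h t ^ 2 * u'' t := by
  rintro r ⟨hr, hrl⟩
  have hm1 : (0 : ℝ) < m - 1 := by
    have : (2 : ℝ) ≤ m := by exact_mod_cast hm
    linarith
  have hIcc : Icc 0 r ⊆ Ici 0 := Icc_subset_Ici_self
  have hIoc : Ioc 0 r ⊆ Ioc 0 l := Ioc_subset_Ioc_right hrl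
  have hIoo : Ioo 0 r ⊆ Ioc 0 l := Ioo_subset_Ioc_self.trans hIoc
  exact sq_mul_le_of_riccati hm1 hr
    (fun t ht => (hhderiv t (hIcc ht)).continuousWithinAt.mono hIcc)
    (fun t ht => (hh'deriv t (hIcc ht)).continuousWithinAt.mono hIcc)
    (fun t ht => (hφderiv t (hIoc ht)).continuousWithinAt.mono hIoc)
    (hu''cont.mono (Icc_subset_Icc_right hrl))
    (fun t ht => (hhderiv t ht.1.le).hasDerivAt (Ici_mem_nhds ht.1))
    (fun t ht => (hh'deriv t ht.1.le).hasDerivAt (Ici_mem_nhds ht.1))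
    (fun t ht => (hφderiv t (hIoo ht)).hasDerivAt (Ioc_mem_nhds ht.1 (ht.2.trans_le hrl)))
    (fun t ht => hode t ht.1.le) hh0 (fun t ht => hRiccati t (hIoo ht)) hlim

theorem stmt_0
    (m : ℕ) (hm : 2 ≤ m)
    (G h h' h'' : ℝ → ℝ)
    (hGcont : ContinuousOn G (Set.Ici 0))
    (hGnonneg : ∀ t ≥ (0:ℝ), 0 ≤ G t)
    (hhderiv : ∀ t ∈ Set.Ici (0:ℝ), HasDerivWithinAt h (h' t) (Set.Ici 0) t)
    (hh'deriv : ∀ t ∈ Set.Ici (0:ℝ), HasDerivWithinAt h' (h'' t) (Set.Ici 0) t)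
    (hh''cont : ContinuousOn h'' (Set.Ici 0))
    (hode : ∀ t ≥ (0:ℝ), h'' t = G t * h t)
    (hh0 : h 0 = 0) (hh'0 : h' 0 = 1)
    (l : ℝ) (hl : 0 < l)
    (u u' u'' : ℝ → ℝ)
    (huderiv : ∀ t ∈ Set.Icc (0:ℝ) l, HasDerivWithinAt u (u' t) (Set.Icc 0 l) t)
    (hu'deriv : ∀ t ∈ Set.Icc (0:ℝ) l, HasDerivWithinAt u' (u'' t) (Set.Icc 0 l) t)
    (hu''cont : ContinuousOn u'' (Set.Icc 0 l))
    (φ φ' : ℝ → ℝ)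
    (hφderiv : ∀ t ∈ Set.Ioc (0:ℝ) l, HasDerivWithinAt φ (φ' t) (Set.Ioc 0 l) t)
    (hφ'cont : ContinuousOn φ' (Set.Ioc 0 l))
    (hRiccati : ∀ t ∈ Set.Ioc (0:ℝ) l,
      φ' t + φ t ^ 2 / ((m : ℝ) - 1) ≤ ((m : ℝ) - 1) * G t + u'' t)
    (hlim : Filter.Tendsto (fun t => h t ^ 2 * φ t)
      (nhdsWithin 0 (Set.Ioi 0)) (nhds 0)) :
    ∀ r ∈ Set.Ioc (0:ℝ) l,
      h r ^ 2 * φ r ≤ ((m : ℝ) - 1) * h r * h' r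
        + ∫ t in (0:ℝ)..r, h t ^ 2 * u'' t :=
  stmt_0_general m hm G h h' h'' hhderiv hh'deriv hode hh0 l u'' hu''cont φ φ' hφderiv hRiccati hlim
end

section
/- Let m ≥ 2 be an integer, let G : [0,∞) → ℝ be continuous with G(t) ≥ 0 for all t ≥ 0, and let h : [0,∞) → ℝ be twice continuously differentiable with h'' = G·h on [0,∞), h(0) = 0 and h'(0) = 1. Let l > 0, let u : [0,l] → ℝ be C², and let φ : (0,l] → ℝ be C¹ and satisfy φ'(t) + φ(t)²/(m−1) ≤ (m−1)·G(t) + u''(t) for every t ∈ (0,l], together with h(t)²·φ(t) → 0 as t → 0⁺. Assume moreover that θ : [0,∞) → ℝ is continuous and nondecreasing and that u'(t) ≥ −θ(t) for all t ∈ [0,l]. Then h(r) > 0 for every r ∈ (0,l] and φ(r) − u'(r) ≤ (m−1)·h'(r)/h(r) + θ(r) for every r ∈ (0,l]. -/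
/-!
The product `h h'` has derivative `h'² + G h² ≥ 0` and vanishes at `0`, so `h h' ≥ 0`; hence `h²`
is nondecreasing, and since `h'(0) = 1` makes `h` positive just to the right of `0`, `h` can never
return to `0`.

For the comparison fix `r` and put `ψ = φ - u'`. By the Riccati inequality and `h'' = G h`,
`K = h² ψ - (m - 1) h h' - θ(r) h²` satisfies
`K' ≤ -(h φ - (m - 1) h')² / (m - 1) - 2 h h' (u' + θ(r)) ≤ 0` on `(0, r)`, the last term being
controlled by `u' ≥ -θ ≥ -θ(r)` there. As `K → 0` at `0⁺`, `K(r) ≤ 0`; dividing by `h(r)² > 0`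
gives the estimate.
-/

open Set Filter Topology

theorem Convex.monotoneOn_of_hasDerivWithinAt_nonneg' {D : Set ℝ} (hD : Convex ℝ D)
    {f f' : ℝ → ℝ} (hf : ∀ x ∈ D, HasDerivWithinAt f (f' x) D x)
    (hf' : ∀ x ∈ interior D, 0 ≤ f' x) : MonotoneOn f D :=
  monotoneOn_of_hasDerivWithinAt_nonneg hD (fun x hx => (hf x hx).continuousWithinAt)
    (fun x hx => (hf x (interior_subset hx)).mono interior_subset) hf'

theorem le_of_hasDerivWithinAt_nonpos_of_tendsto {f f' : ℝ → ℝ} {a b c : ℝ} (hab : a < b)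
    (hf : ∀ x ∈ Ioc a b, HasDerivWithinAt f (f' x) (Ioc a b) x)
    (hf' : ∀ x ∈ Ioo a b, f' x ≤ 0) (hlim : Tendsto f (𝓝[>] a) (𝓝 c)) : f b ≤ c := by
  have hanti : AntitoneOn f (Ioc a b) :=
    antitoneOn_of_hasDerivWithinAt_nonpos (convex_Ioc a b)
      (fun x hx => (hf x hx).continuousWithinAt)
      (fun x hx => (hf x (interior_subset hx)).mono interior_subset)
      (by simpa only [interior_Ioc] using hf')
  refine ge_of_tendsto hlim ?_
  filter_upwards [Ioc_mem_nhdsGT hab] with x hx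
  exact hanti hx (right_mem_Ioc.2 hab) hx.2

theorem two_mul_mul_mul_add_sq_mul_le {a x y p q g : ℝ} (ha : 0 < a)
    (hq : q + p ^ 2 / a ≤ a * g) : 2 * x * y * p + x ^ 2 * q ≤ a * y ^ 2 + a * g * x ^ 2 := by
  have hw : p ^ 2 / a * a = p ^ 2 := div_mul_cancel₀ _ ha.ne'
  nlinarith [sq_nonneg (x * p - a * y), mul_le_mul_of_nonneg_left hq (sq_nonneg x)]

section Jacobi

variable {G h h' h'' : ℝ → ℝ}

theorem jacobi_mul_deriv_nonneg (hG : ∀ t ≥ (0:ℝ), 0 ≤ G t)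
    (hh : ∀ t ∈ Ici (0:ℝ), HasDerivWithinAt h (h' t) (Ici 0) t)
    (hh' : ∀ t ∈ Ici (0:ℝ), HasDerivWithinAt h' (h'' t) (Ici 0) t)
    (hode : ∀ t ≥ (0:ℝ), h'' t = G t * h t) (h0 : h 0 = 0) :
    ∀ t ≥ (0:ℝ), 0 ≤ h t * h' t := by
  have hmono : MonotoneOn (fun t => h t * h' t) (Ici 0) := by
    refine (convex_Ici 0).monotoneOn_of_hasDerivWithinAt_nonneg'
      (fun t ht => (hh t ht).mul (hh' t ht)) fun t ht => ?_
    rw [interior_Ici] at ht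
    rw [hode t ht.le]
    nlinarith [mul_nonneg (hG t ht.le) (mul_self_nonneg (h t)), mul_self_nonneg (h' t)]
  intro t ht
  simpa [h0] using hmono self_mem_Ici ht ht

theorem jacobi_pos (hG : ∀ t ≥ (0:ℝ), 0 ≤ G t)
    (hh : ∀ t ∈ Ici (0:ℝ), HasDerivWithinAt h (h' t) (Ici 0) t)
    (hh' : ∀ t ∈ Ici (0:ℝ), HasDerivWithinAt h' (h'' t) (Ici 0) t)
    (hode : ∀ t ≥ (0:ℝ), h'' t = G t * h t) (h0 : h 0 = 0) (h'0 : h' 0 = 1) :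
    ∀ t > (0:ℝ), 0 < h t := by
  intro t ht
  have hsq : MonotoneOn (fun t => h t * h t) (Ici 0) := by
    refine (convex_Ici 0).monotoneOn_of_hasDerivWithinAt_nonneg'
      (fun t ht => (hh t ht).mul (hh t ht)) fun s hs => ?_
    rw [interior_Ici] at hs
    linarith [jacobi_mul_deriv_nonneg hG hh hh' hode h0 s hs.le]
  obtain ⟨s, hs_slope, hs⟩ : ∃ s, 0 < slope h 0 s ∧ s ∈ Ioc 0 t := by
    have hslope : Tendsto (slope h 0) (𝓝[>] 0) (𝓝 1) :=
      h'0 ▸ (hasDerivWithinAt_iff_tendsto_slope' (lt_irrefl 0)).1 (hh 0 self_mem_Ici).Ioi_of_Ici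
    exact ((hslope.eventually (lt_mem_nhds one_pos)).and (Ioc_mem_nhdsGT ht)).exists
  have hhs : 0 < h s := by
    rw [slope_def_field, h0, sub_zero, sub_zero] at hs_slope
    exact (div_pos_iff_of_pos_right hs.1).1 hs_slope
  by_contra! hht
  obtain ⟨x, hx, hx0⟩ : ∃ x ∈ Icc s t, h x = 0 :=
    intermediate_value_Icc' hs.2 (fun x hx => (hh x (hs.1.le.trans hx.1)).continuousWithinAt.mono
      fun y hy => hs.1.le.trans hy.1) ⟨hht, hhs.le⟩
  have := hsq (mem_Ici.2 hs.1.le) (mem_Ici.2 (hs.1.le.trans hx.1)) hx.1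
  simp only [hx0, mul_zero] at this
  nlinarith

end Jacobi

theorem sub_le_mul_div_add_of_riccati {a b c r : ℝ} {G h h' φ φ' u' u'' : ℝ → ℝ} (ha : 0 < a)
    (hr : 0 < r) (hhr : 0 < h r)
    (hh : ∀ t ∈ Ioc 0 r, HasDerivWithinAt h (h' t) (Ioc 0 r) t)
    (hh' : ∀ t ∈ Ioc 0 r, HasDerivWithinAt h' (G t * h t) (Ioc 0 r) t)
    (hu' : ∀ t ∈ Ioc 0 r, HasDerivWithinAt u' (u'' t) (Ioc 0 r) t)
    (hφ : ∀ t ∈ Ioc 0 r, HasDerivWithinAt φ (φ' t) (Ioc 0 r) t)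
    (hRiccati : ∀ t ∈ Ioo 0 r, φ' t + φ t ^ 2 / a ≤ a * G t + u'' t)
    (hhh' : ∀ t ∈ Ioo 0 r, 0 ≤ h t * h' t) (hu'c : ∀ t ∈ Ioo 0 r, -c ≤ u' t)
    (hh0 : Tendsto h (𝓝[>] 0) (𝓝 0)) (hh'0 : Tendsto h' (𝓝[>] 0) (𝓝 1))
    (hu'0 : Tendsto u' (𝓝[>] 0) (𝓝 b)) (hφ0 : Tendsto (fun t => h t ^ 2 * φ t) (𝓝[>] 0) (𝓝 0)) :
    φ r - u' r ≤ a * h' r / h r + c := by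
  set K : ℝ → ℝ := fun t => h t ^ 2 * (φ t - u' t) - a * (h t * h' t) - c * h t ^ 2
  have hK : ∀ t ∈ Ioc 0 r, HasDerivWithinAt K
      (2 * h t * h' t * (φ t - u' t) + h t ^ 2 * (φ' t - u'' t)
        - a * (h' t * h' t + h t * (G t * h t)) - c * (2 * h t * h' t)) (Ioc 0 r) t := by
    intro t ht
    have hsq : HasDerivWithinAt (fun s => h s ^ 2) (2 * h t * h' t) (Ioc 0 r) t := by
      simpa using (hh t ht).fun_pow 2
    exact ((hsq.mul ((hφ t ht).sub (hu' t ht))).sub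
      (((hh t ht).mul (hh' t ht)).const_mul a)).sub (hsq.const_mul c)
  have hK' : ∀ t ∈ Ioo 0 r, 2 * h t * h' t * (φ t - u' t) + h t ^ 2 * (φ' t - u'' t)
      - a * (h' t * h' t + h t * (G t * h t)) - c * (2 * h t * h' t) ≤ 0 := by
    intro t ht
    have hsquare := two_mul_mul_mul_add_sq_mul_le (x := h t) (y := h' t) ha
      (show φ' t - u'' t + φ t ^ 2 / a ≤ a * G t by linarith [hRiccati t ht])
    nlinarith [mul_nonneg (hhh' t ht) (by linarith [hu'c t ht] : 0 ≤ u' t + c)]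
  have hKlim : Tendsto K (𝓝[>] 0) (𝓝 0) := by
    have := ((hφ0.sub ((hh0.pow 2).mul hu'0)).sub ((hh0.mul hh'0).const_mul a)).sub
      ((hh0.pow 2).const_mul c)
    convert this using 1
    · ext t; simp only [K]; ring
    · simp
  have hKr : K r ≤ 0 := le_of_hasDerivWithinAt_nonpos_of_tendsto hr hK hK' hKlim
  simp only [K] at hKr
  rw [← sub_le_iff_le_add, le_div_iff₀ hhr]
  exact le_of_mul_le_mul_left (by linarith) hhr

theorem stmt_1_general
    (m : ℕ) (hm : 2 ≤ m)
    (G h h' h'' : ℝ → ℝ)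
    (hGnonneg : ∀ t ≥ (0:ℝ), 0 ≤ G t)
    (hhderiv : ∀ t ∈ Set.Ici (0:ℝ), HasDerivWithinAt h (h' t) (Set.Ici 0) t)
    (hh'deriv : ∀ t ∈ Set.Ici (0:ℝ), HasDerivWithinAt h' (h'' t) (Set.Ici 0) t)
    (hode : ∀ t ≥ (0:ℝ), h'' t = G t * h t)
    (hh0 : h 0 = 0) (hh'0 : h' 0 = 1)
    (l : ℝ)
    (u' u'' : ℝ → ℝ)
    (hu'deriv : ∀ t ∈ Set.Icc (0:ℝ) l, HasDerivWithinAt u' (u'' t) (Set.Icc 0 l) t)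
    (φ φ' : ℝ → ℝ)
    (hφderiv : ∀ t ∈ Set.Ioc (0:ℝ) l, HasDerivWithinAt φ (φ' t) (Set.Ioc 0 l) t)
    (hRiccati : ∀ t ∈ Set.Ioc (0:ℝ) l,
      φ' t + φ t ^ 2 / ((m : ℝ) - 1) ≤ ((m : ℝ) - 1) * G t + u'' t)
    (hlim : Filter.Tendsto (fun t => h t ^ 2 * φ t)
      (nhdsWithin 0 (Set.Ioi 0)) (nhds 0))
    (θ : ℝ → ℝ)
    (hθmono : MonotoneOn θ (Set.Ici 0))
    (hu'bound : ∀ t ∈ Set.Icc (0:ℝ) l, -θ t ≤ u' t) :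
    ∀ r ∈ Set.Ioc (0:ℝ) l,
      0 < h r ∧ φ r - u' r ≤ ((m : ℝ) - 1) * h' r / h r + θ r := by
  intro r hr
  have hl : 0 < l := hr.1.trans_le hr.2
  have hm1 : (0:ℝ) < (m:ℝ) - 1 := by
    have : (2:ℝ) ≤ m := by exact_mod_cast hm
    linarith
  have hIcc : Ioc 0 r ⊆ Icc 0 l := fun t ht => ⟨ht.1.le, ht.2.trans hr.2⟩
  have hIoc : Ioc 0 r ⊆ Ioc 0 l := fun t ht => ⟨ht.1, ht.2.trans hr.2⟩
  have hhr := jacobi_pos hGnonneg hhderiv hh'deriv hode hh0 hh'0 r hr.1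
  refine ⟨hhr, sub_le_mul_div_add_of_riccati hm1 hr.1 hhr
    (fun t ht => (hhderiv t ht.1.le).mono fun s hs => hs.1.le)
    (fun t ht => hode t ht.1.le ▸ (hh'deriv t ht.1.le).mono fun s hs => hs.1.le)
    (fun t ht => (hu'deriv t (hIcc ht)).mono hIcc)
    (fun t ht => (hφderiv t (hIoc ht)).mono hIoc)
    (fun t ht => hRiccati t (hIoc (Ioo_subset_Ioc_self ht)))
    (fun t ht => jacobi_mul_deriv_nonneg hGnonneg hhderiv hh'deriv hode hh0 t ht.1.le)
    (fun t ht => (neg_le_neg (hθmono ht.1.le hr.1.le ht.2.le)).trans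
      (hu'bound t (hIcc (Ioo_subset_Ioc_self ht))))
    (by simpa only [hh0] using (hhderiv 0 self_mem_Ici).Ioi_of_Ici.continuousWithinAt.tendsto)
    (by simpa only [hh'0] using (hh'deriv 0 self_mem_Ici).Ioi_of_Ici.continuousWithinAt.tendsto)
    ((hu'deriv 0 ⟨le_rfl, hl.le⟩).continuousWithinAt.tendsto.mono_left
      (nhdsWithin_le_of_mem (Icc_mem_nhdsGT hl)))
    hlim⟩

theorem stmt_1
    (m : ℕ) (hm : 2 ≤ m)
    (G h h' h'' : ℝ → ℝ)
    (hGcont : ContinuousOn G (Set.Ici 0))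
    (hGnonneg : ∀ t ≥ (0:ℝ), 0 ≤ G t)
    (hhderiv : ∀ t ∈ Set.Ici (0:ℝ), HasDerivWithinAt h (h' t) (Set.Ici 0) t)
    (hh'deriv : ∀ t ∈ Set.Ici (0:ℝ), HasDerivWithinAt h' (h'' t) (Set.Ici 0) t)
    (hh''cont : ContinuousOn h'' (Set.Ici 0))
    (hode : ∀ t ≥ (0:ℝ), h'' t = G t * h t)
    (hh0 : h 0 = 0) (hh'0 : h' 0 = 1)
    (l : ℝ) (hl : 0 < l)
    (u u' u'' : ℝ → ℝ)
    (huderiv : ∀ t ∈ Set.Icc (0:ℝ) l, HasDerivWithinAt u (u' t) (Set.Icc 0 l) t)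
    (hu'deriv : ∀ t ∈ Set.Icc (0:ℝ) l, HasDerivWithinAt u' (u'' t) (Set.Icc 0 l) t)
    (hu''cont : ContinuousOn u'' (Set.Icc 0 l))
    (φ φ' : ℝ → ℝ)
    (hφderiv : ∀ t ∈ Set.Ioc (0:ℝ) l, HasDerivWithinAt φ (φ' t) (Set.Ioc 0 l) t)
    (hφ'cont : ContinuousOn φ' (Set.Ioc 0 l))
    (hRiccati : ∀ t ∈ Set.Ioc (0:ℝ) l,
      φ' t + φ t ^ 2 / ((m : ℝ) - 1) ≤ ((m : ℝ) - 1) * G t + u'' t)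
    (hlim : Filter.Tendsto (fun t => h t ^ 2 * φ t)
      (nhdsWithin 0 (Set.Ioi 0)) (nhds 0))
    (θ : ℝ → ℝ)
    (hθcont : ContinuousOn θ (Set.Ici 0))
    (hθmono : MonotoneOn θ (Set.Ici 0))
    (hu'bound : ∀ t ∈ Set.Icc (0:ℝ) l, -θ t ≤ u' t) :
    ∀ r ∈ Set.Ioc (0:ℝ) l,
      0 < h r ∧ φ r - u' r ≤ ((m : ℝ) - 1) * h' r / h r + θ r :=
  stmt_1_general m hm G h h' h'' hGnonneg hhderiv hh'deriv hode hh0 hh'0 l u' u'' hu'deriv φ φ'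
    hφderiv hRiccati hlim θ hθmono hu'bound
end

section
/- Let m ≥ 2 be an integer, let G : [0,∞) → ℝ be continuous with G(t) ≥ 0 for all t ≥ 0, and let h : [0,∞) → ℝ be twice continuously differentiable with h'' = G·h on [0,∞), h(0) = 0 and h'(0) = 1. Let l > 0, let u : [0,l] → ℝ be C², and let φ : (0,l] → ℝ be C¹ and satisfy φ'(t) + φ(t)²/(m−1) ≤ (m−1)·G(t) + u''(t) for every t ∈ (0,l], together with h(t)²·φ(t) → 0 as t → 0⁺. Assume moreover that ξ, ω : [0,l] → ℝ are continuous, that ω is nondecreasing, and that ξ(t) ≤ u(t) ≤ ω(t) for all t ∈ [0,l]. Then for every r ∈ (0,l] one has h(r) > 0 and φ(r) − u'(r) ≤ (1 + (2/(m−1))·(ω(r) − ξ(r)))·(m−1)·h'(r)/h(r). -/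
open Set Filter Topology

lemma stmt2_aux_mono (G h h' h'' : ℝ → ℝ)
    (hGnonneg : ∀ t ≥ (0:ℝ), 0 ≤ G t)
    (hhderiv : ∀ t ∈ Set.Ici (0:ℝ), HasDerivWithinAt h (h' t) (Set.Ici 0) t)
    (hh'deriv : ∀ t ∈ Set.Ici (0:ℝ), HasDerivWithinAt h' (h'' t) (Set.Ici 0) t)
    (hode : ∀ t ≥ (0:ℝ), h'' t = G t * h t)
    (hh0 : h 0 = 0) (hh'0 : h' 0 = 1)
    (c : ℝ) (hc : 0 < c) (hnn : ∀ s ∈ Set.Icc (0:ℝ) c, 0 ≤ h s) :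
    (∀ t ∈ Set.Icc (0:ℝ) c, 1 ≤ h' t) ∧ 0 < h c := by
  have hsub : Set.Icc (0:ℝ) c ⊆ Set.Ici 0 := fun x hx => hx.1
  have hconth' : ContinuousOn h' (Set.Icc 0 c) := fun t ht =>
    ((hh'deriv t ht.1).continuousWithinAt).mono hsub
  have hconth : ContinuousOn h (Set.Icc 0 c) := fun t ht =>
    ((hhderiv t ht.1).continuousWithinAt).mono hsub
  have hDA : ∀ x ∈ Set.Ioo (0:ℝ) c, HasDerivAt h' (h'' x) x := fun x hx =>
    (hh'deriv x hx.1.le).hasDerivAt (Ici_mem_nhds hx.1)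
  have hmono : MonotoneOn h' (Set.Icc 0 c) := by
    apply monotoneOn_of_deriv_nonneg (convex_Icc _ _) hconth'
    · rw [interior_Icc]
      exact fun x hx => ((hDA x hx).differentiableAt).differentiableWithinAt
    · rw [interior_Icc]
      intro x hx
      rw [(hDA x hx).deriv, hode x hx.1.le]
      exact mul_nonneg (hGnonneg x hx.1.le) (hnn x ⟨hx.1.le, hx.2.le⟩)
  have h'ge : ∀ t ∈ Set.Icc (0:ℝ) c, 1 ≤ h' t := by
    intro t ht
    have := hmono (Set.left_mem_Icc.2 hc.le) ht ht.1
    rwa [hh'0] at this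
  refine ⟨h'ge, ?_⟩
  have hsm : StrictMonoOn h (Set.Icc 0 c) := by
    apply strictMonoOn_of_deriv_pos (convex_Icc _ _) hconth
    rw [interior_Icc]
    intro x hx
    rw [((hhderiv x hx.1.le).hasDerivAt (Ici_mem_nhds hx.1)).deriv]
    linarith [h'ge x ⟨hx.1.le, hx.2.le⟩]
  have := hsm (Set.left_mem_Icc.2 hc.le) (Set.right_mem_Icc.2 hc.le) hc
  rwa [hh0] at this

lemma stmt2_aux_pos (G h h' h'' : ℝ → ℝ)
    (hGnonneg : ∀ t ≥ (0:ℝ), 0 ≤ G t)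
    (hhderiv : ∀ t ∈ Set.Ici (0:ℝ), HasDerivWithinAt h (h' t) (Set.Ici 0) t)
    (hh'deriv : ∀ t ∈ Set.Ici (0:ℝ), HasDerivWithinAt h' (h'' t) (Set.Ici 0) t)
    (hode : ∀ t ≥ (0:ℝ), h'' t = G t * h t)
    (hh0 : h 0 = 0) (hh'0 : h' 0 = 1) :
    ∀ r > (0:ℝ), (∀ t ∈ Set.Icc (0:ℝ) r, 1 ≤ h' t) ∧ 0 < h r := by
  have hnnall : ∀ b > (0:ℝ), ∀ s ∈ Set.Icc (0:ℝ) b, 0 ≤ h s := by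
    intro b hb
    by_contra hcon
    push_neg at hcon
    obtain ⟨t0, ht0, ht0neg⟩ := hcon
    set B := {t : ℝ | t ∈ Set.Icc (0:ℝ) b ∧ h t < 0} with hBdef
    have hBne : B.Nonempty := ⟨t0, ht0, ht0neg⟩
    have hBbd : BddBelow B := ⟨0, fun t ht => ht.1.1⟩
    set c := sInf B with hcdef
    have hc0 : 0 ≤ c := le_csInf hBne fun t ht => ht.1.1
    have hcb : c ≤ b := le_trans (csInf_le hBbd ⟨ht0, ht0neg⟩) ht0.2
    have hlt : ∀ t, 0 ≤ t → t ≤ b → t < c → 0 ≤ h t := by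
      intro t ht1 ht2 htc
      by_contra hneg
      push_neg at hneg
      exact absurd (csInf_le hBbd ⟨⟨ht1, ht2⟩, hneg⟩) (not_le.2 htc)
    rcases eq_or_lt_of_le hc0 with hc | hc
    · -- c = 0 : use slope at 0
      have hs := hhderiv 0 Set.self_mem_Ici
      rw [hh'0, hasDerivWithinAt_iff_tendsto_slope] at hs
      have hset : (Set.Ici (0:ℝ)) \ {0} = Set.Ioi 0 := by
        ext x
        simp only [Set.mem_diff, Set.mem_Ici, Set.mem_singleton_iff, Set.mem_Ioi]
        constructor
        · rintro ⟨hx1, hx2⟩; exact lt_of_le_of_ne hx1 (Ne.symm hx2)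
        · intro hx; exact ⟨hx.le, hx.ne'⟩
      rw [hset] at hs
      have hev : ∀ᶠ x in 𝓝[>] (0:ℝ), 0 < slope h 0 x :=
        hs.eventually (eventually_gt_nhds one_pos)
      rw [eventually_nhdsWithin_iff, Metric.eventually_nhds_iff] at hev
      obtain ⟨ε, hε, hball⟩ := hev
      obtain ⟨t, htB, htlt⟩ := exists_lt_of_csInf_lt hBne (show sInf B < ε by rw [← hcdef, ← hc]; exact hε)
      have ht0' : 0 < t := by
        rcases eq_or_lt_of_le htB.1.1 with h0t | h0t
        · exfalso; have h2 := htB.2; rw [← h0t, hh0] at h2; exact lt_irrefl 0 h2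
        · exact h0t
      have hd : dist t 0 < ε := by
        rw [Real.dist_eq, sub_zero, abs_of_pos ht0']; exact htlt
      have := hball hd ht0'
      rw [slope_def_field] at this
      have : 0 < h t := by
        have h2 : 0 < (h t - h 0) / (t - 0) := this
        rw [hh0, sub_zero, sub_zero] at h2
        exact (div_pos_iff.1 h2).resolve_right (fun hx => absurd ht0' (not_lt.2 hx.2.le)) |>.1
      linarith [htB.2]
    · -- 0 < c
      have hhc : 0 ≤ h c := by
        have hne : (𝓝[Set.Ico (0:ℝ) c] c).NeBot := by
          rw [← mem_closure_iff_nhdsWithin_neBot, closure_Ico (by linarith : (0:ℝ) ≠ c)]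
          exact ⟨hc0, le_rfl⟩
        have hten : Tendsto h (𝓝[Set.Ico (0:ℝ) c] c) (𝓝 (h c)) :=
          ((hhderiv c hc0).continuousWithinAt).mono_left
            (nhdsWithin_mono _ (fun x hx => hx.1))
        refine ge_of_tendsto hten ?_
        filter_upwards [self_mem_nhdsWithin] with x hx
        exact hlt x hx.1 (le_trans hx.2.le hcb) hx.2
      have hnn0c : ∀ s ∈ Set.Icc (0:ℝ) c, 0 ≤ h s := by
        intro s hs
        rcases eq_or_lt_of_le hs.2 with hsc | hsc
        · rw [hsc]; exact hhc
        · exact hlt s hs.1 (le_trans hs.2 hcb) hsc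
      obtain ⟨h'ge, hcpos⟩ := stmt2_aux_mono G h h' h'' hGnonneg hhderiv hh'deriv hode hh0 hh'0 c hc hnn0c
      have hcont : ContinuousAt h c := ((hhderiv c hc.le).hasDerivAt (Ici_mem_nhds hc)).continuousAt
      have hev : ∀ᶠ x in 𝓝 c, 0 < h x := hcont.eventually (eventually_gt_nhds hcpos)
      obtain ⟨ε, hε, hball⟩ := Metric.eventually_nhds_iff.mp hev
      obtain ⟨t, htB, htlt⟩ := exists_lt_of_csInf_lt hBne (show sInf B < c + ε by rw [← hcdef]; linarith)
      have htc : c ≤ t := csInf_le hBbd htB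
      have : 0 < h t := by
        apply hball
        rw [Real.dist_eq, abs_lt]
        constructor <;> linarith
      linarith [htB.2]
  intro r hr
  exact stmt2_aux_mono G h h' h'' hGnonneg hhderiv hh'deriv hode hh0 hh'0 r hr (hnnall r hr)


/- STATEMENT 2: one-variable core of the second weighted volume comparison
theorem of Section 3: under the same Riccati setup as Statement 0, if moreover
ξ ≤ u ≤ ω on [0,l] with ξ, ω continuous and ω nondecreasing, then h(r) > 0
and φ(r) - u'(r) ≤ (1 + (2/(m-1))(ω(r) - ξ(r)))·(m-1)·h'(r)/h(r)
for every r ∈ (0,l]. -/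
theorem stmt_2
    (m : ℕ) (hm : 2 ≤ m)
    (G h h' h'' : ℝ → ℝ)
    (hGcont : ContinuousOn G (Set.Ici 0))
    (hGnonneg : ∀ t ≥ (0:ℝ), 0 ≤ G t)
    (hhderiv : ∀ t ∈ Set.Ici (0:ℝ), HasDerivWithinAt h (h' t) (Set.Ici 0) t)
    (hh'deriv : ∀ t ∈ Set.Ici (0:ℝ), HasDerivWithinAt h' (h'' t) (Set.Ici 0) t)
    (hh''cont : ContinuousOn h'' (Set.Ici 0))
    (hode : ∀ t ≥ (0:ℝ), h'' t = G t * h t)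
    (hh0 : h 0 = 0) (hh'0 : h' 0 = 1)
    (l : ℝ) (hl : 0 < l)
    (u u' u'' : ℝ → ℝ)
    (huderiv : ∀ t ∈ Set.Icc (0:ℝ) l, HasDerivWithinAt u (u' t) (Set.Icc 0 l) t)
    (hu'deriv : ∀ t ∈ Set.Icc (0:ℝ) l, HasDerivWithinAt u' (u'' t) (Set.Icc 0 l) t)
    (hu''cont : ContinuousOn u'' (Set.Icc 0 l))
    (φ φ' : ℝ → ℝ)
    (hφderiv : ∀ t ∈ Set.Ioc (0:ℝ) l, HasDerivWithinAt φ (φ' t) (Set.Ioc 0 l) t)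
    (hφ'cont : ContinuousOn φ' (Set.Ioc 0 l))
    (hRiccati : ∀ t ∈ Set.Ioc (0:ℝ) l,
      φ' t + φ t ^ 2 / ((m : ℝ) - 1) ≤ ((m : ℝ) - 1) * G t + u'' t)
    (hlim : Filter.Tendsto (fun t => h t ^ 2 * φ t)
      (nhdsWithin 0 (Set.Ioi 0)) (nhds 0))
    (ξ ω : ℝ → ℝ)
    (hξcont : ContinuousOn ξ (Set.Icc 0 l))
    (hωcont : ContinuousOn ω (Set.Icc 0 l))
    (hωmono : MonotoneOn ω (Set.Icc 0 l))
    (hbound : ∀ t ∈ Set.Icc (0:ℝ) l, ξ t ≤ u t ∧ u t ≤ ω t) :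
    ∀ r ∈ Set.Ioc (0:ℝ) l,
      0 < h r ∧ φ r - u' r ≤
        (1 + 2 / ((m : ℝ) - 1) * (ω r - ξ r)) * (((m : ℝ) - 1) * h' r / h r) := by
  intro r hr
  obtain ⟨hr0, hrl⟩ := hr
  set M : ℝ := (m:ℝ) - 1 with hMdef
  have hM1 : 1 ≤ M := by
    have : (2:ℝ) ≤ (m:ℝ) := by exact_mod_cast hm
    rw [hMdef]; linarith
  have hM0 : 0 < M := by linarith
  obtain ⟨h'ge, hrpos⟩ := stmt2_aux_pos G h h' h'' hGnonneg hhderiv hh'deriv hode hh0 hh'0 r hr0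
  refine ⟨hrpos, ?_⟩
  set W : ℝ → ℝ := fun t => h t * h t * φ t - M * (h t * h' t) - h t * h t * u' t
      + 2 * (h t * h' t * u t) - 2 * ω r * (h t * h' t) with hWdef
  set D : ℝ → ℝ := fun t =>
      ((h' t * h t + h t * h' t) * φ t + h t * h t * φ' t)
      - M * (h' t * h' t + h t * h'' t)
      - ((h' t * h t + h t * h' t) * u' t + h t * h t * u'' t)
      + 2 * ((h' t * h' t + h t * h'' t) * u t + h t * h' t * u' t)
      - 2 * ω r * (h' t * h' t + h t * h'' t) with hDdef
  have hWderiv : ∀ t ∈ Set.Ioo (0:ℝ) r, HasDerivAt W (D t) t := by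
    intro t ht
    have htl : t < l := lt_of_lt_of_le ht.2 hrl
    have hh : HasDerivAt h (h' t) t := (hhderiv t ht.1.le).hasDerivAt (Ici_mem_nhds ht.1)
    have hh' : HasDerivAt h' (h'' t) t := (hh'deriv t ht.1.le).hasDerivAt (Ici_mem_nhds ht.1)
    have hφt : HasDerivAt φ (φ' t) t :=
      (hφderiv t ⟨ht.1, htl.le⟩).hasDerivAt (Ioc_mem_nhds ht.1 htl)
    have hut : HasDerivAt u (u' t) t :=
      (huderiv t ⟨ht.1.le, htl.le⟩).hasDerivAt (Icc_mem_nhds ht.1 htl)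
    have hu't : HasDerivAt u' (u'' t) t :=
      (hu'deriv t ⟨ht.1.le, htl.le⟩).hasDerivAt (Icc_mem_nhds ht.1 htl)
    exact ((((hh.mul hh).mul hφt).sub ((hh.mul hh').const_mul M)).sub
        ((hh.mul hh).mul hu't)).add (((hh.mul hh').mul hut).const_mul 2) |>.sub
        ((hh.mul hh').const_mul (2 * ω r))
  have hDnonpos : ∀ t ∈ Set.Ioo (0:ℝ) r, D t ≤ 0 := by
    intro t ht
    have ht0 := ht.1
    have htl : t ≤ l := le_trans ht.2.le hrl
    have hG := hGnonneg t ht0.le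
    have hR := hRiccati t ⟨ht0, htl⟩
    have hR' : M * φ' t + φ t ^ 2 ≤ M * (M * G t + u'' t) := by
      have h1 := mul_le_mul_of_nonneg_left hR hM0.le
      have h2 : M * (φ' t + φ t ^ 2 / M) = M * φ' t + φ t ^ 2 := by
        field_simp
      rw [h2] at h1
      exact h1
    have hode_t : h'' t = G t * h t := hode t ht0.le
    have huω : u t ≤ ω r :=
      le_trans (hbound t ⟨ht0.le, htl⟩).2 (hωmono ⟨ht0.le, htl⟩ ⟨hr0.le, hrl⟩ ht.2.le)
    have key : M * D t ≤ 0 := by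
      have sq1 := sq_nonneg (h t * φ t - M * h' t)
      have prod1 : 0 ≤ (h' t * h' t + G t * (h t * h t)) * (ω r - u t) :=
        mul_nonneg (by nlinarith [mul_self_nonneg (h' t), mul_self_nonneg (h t)])
          (by linarith)
      have hsq := mul_le_mul_of_nonneg_left hR' (mul_self_nonneg (h t))
      simp only [hDdef, hode_t]
      nlinarith [hsq, sq1, mul_nonneg hM0.le prod1]
    by_contra hpos
    push_neg at hpos
    nlinarith [mul_pos hM0 hpos]
  have hWle : ∀ a ∈ Set.Ioo (0:ℝ) r, W r ≤ W a := by
    intro a ha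
    have hsub1 : Set.Icc a r ⊆ Set.Ici 0 := fun x hx => le_trans ha.1.le hx.1
    have hsub2 : Set.Icc a r ⊆ Set.Icc 0 l := fun x hx =>
      ⟨le_trans ha.1.le hx.1, le_trans hx.2 hrl⟩
    have hsub3 : Set.Icc a r ⊆ Set.Ioc 0 l := fun x hx =>
      ⟨lt_of_lt_of_le ha.1 hx.1, le_trans hx.2 hrl⟩
    have ch : ContinuousOn h (Set.Icc a r) := fun x hx =>
      ((hhderiv x (hsub1 hx)).continuousWithinAt).mono hsub1
    have ch' : ContinuousOn h' (Set.Icc a r) := fun x hx =>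
      ((hh'deriv x (hsub1 hx)).continuousWithinAt).mono hsub1
    have cφ : ContinuousOn φ (Set.Icc a r) := fun x hx =>
      ((hφderiv x (hsub3 hx)).continuousWithinAt).mono hsub3
    have cu : ContinuousOn u (Set.Icc a r) := fun x hx =>
      ((huderiv x (hsub2 hx)).continuousWithinAt).mono hsub2
    have cu' : ContinuousOn u' (Set.Icc a r) := fun x hx =>
      ((hu'deriv x (hsub2 hx)).continuousWithinAt).mono hsub2
    have hWcont : ContinuousOn W (Set.Icc a r) :=
      (((((ch.mul ch).mul cφ).sub (continuousOn_const.mul (ch.mul ch'))).sub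
        ((ch.mul ch).mul cu')).add (continuousOn_const.mul ((ch.mul ch').mul cu))).sub
        (continuousOn_const.mul (ch.mul ch'))
    have hanti : AntitoneOn W (Set.Icc a r) := by
      apply antitoneOn_of_deriv_nonpos (convex_Icc a r) hWcont
      · rw [interior_Icc]
        exact fun x hx =>
          ((hWderiv x ⟨lt_trans ha.1 hx.1, hx.2⟩).differentiableAt).differentiableWithinAt
      · rw [interior_Icc]
        intro x hx
        rw [(hWderiv x ⟨lt_trans ha.1 hx.1, hx.2⟩).deriv]
        exact hDnonpos x ⟨lt_trans ha.1 hx.1, hx.2⟩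
    exact hanti (Set.left_mem_Icc.2 ha.2.le) (Set.right_mem_Icc.2 ha.2.le) ha.2.le
  -- limits as t → 0⁺
  have hF : 𝓝[Set.Ioc (0:ℝ) l] (0:ℝ) = 𝓝[Set.Ioi 0] 0 := nhdsWithin_Ioc_eq_nhdsGT hl
  have hle1 : 𝓝[Set.Ioi (0:ℝ)] (0:ℝ) ≤ 𝓝[Set.Ici 0] 0 :=
    nhdsWithin_mono _ Set.Ioi_subset_Ici_self
  have hle2 : 𝓝[Set.Ioi (0:ℝ)] (0:ℝ) ≤ 𝓝[Set.Icc 0 l] 0 := by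
    rw [← hF]; exact nhdsWithin_mono _ Set.Ioc_subset_Icc_self
  have th : Tendsto h (𝓝[Set.Ioi (0:ℝ)] 0) (𝓝 0) := by
    have := (hhderiv 0 Set.self_mem_Ici).continuousWithinAt
    rw [ContinuousWithinAt, hh0] at this
    exact this.mono_left hle1
  have th' : Tendsto h' (𝓝[Set.Ioi (0:ℝ)] 0) (𝓝 1) := by
    have := (hh'deriv 0 Set.self_mem_Ici).continuousWithinAt
    rw [ContinuousWithinAt, hh'0] at this
    exact this.mono_left hle1
  have tu : Tendsto u (𝓝[Set.Ioi (0:ℝ)] 0) (𝓝 (u 0)) :=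
    ((huderiv 0 ⟨le_rfl, hl.le⟩).continuousWithinAt).mono_left hle2
  have tu' : Tendsto u' (𝓝[Set.Ioi (0:ℝ)] 0) (𝓝 (u' 0)) :=
    ((hu'deriv 0 ⟨le_rfl, hl.le⟩).continuousWithinAt).mono_left hle2
  have hlim' : Tendsto (fun t => h t * h t * φ t) (𝓝[Set.Ioi (0:ℝ)] 0) (𝓝 0) := by
    have : (fun t => h t * h t * φ t) = fun t => h t ^ 2 * φ t := by
      funext t; ring
    rw [this]; exact hlim
  have tW : Tendsto W (𝓝[Set.Ioi (0:ℝ)] 0) (𝓝 0) := by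
    have tW0 := ((((hlim'.sub ((th.mul th').const_mul M)).sub ((th.mul th).mul tu')).add
      (((th.mul th').mul tu).const_mul 2)).sub ((th.mul th').const_mul (2 * ω r)))
    rw [hWdef]
    convert tW0 using 2
    ring
  have hWr : W r ≤ 0 := by
    have hev : ∀ᶠ a in 𝓝[Set.Ioi (0:ℝ)] (0:ℝ), W r ≤ W a := by
      filter_upwards [Ioo_mem_nhdsGT_of_mem (Set.left_mem_Ico.2 hr0)] with a ha
        using hWle a ha
    exact ge_of_tendsto tW hev
  -- conclude
  have hξu := (hbound r ⟨hr0.le, hrl⟩).1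
  have h'r : 1 ≤ h' r := h'ge r (Set.right_mem_Icc.2 hr0.le)
  have hWr' : h r * h r * φ r - M * (h r * h' r) - h r * h r * u' r
      + 2 * (h r * h' r * u r) - 2 * ω r * (h r * h' r) ≤ 0 := hWr
  have key3 : (φ r - u' r) * h r * h r ≤ (M * h' r + 2 * (ω r - ξ r) * h' r) * h r := by
    nlinarith [hWr', mul_nonneg (mul_nonneg hrpos.le (le_trans zero_le_one h'r))
      (sub_nonneg.2 hξu)]
  have hfinal : φ r - u' r ≤ (M * h' r + 2 * (ω r - ξ r) * h' r) / h r := by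
    rw [le_div_iff₀ hrpos]
    exact le_of_mul_le_mul_right key3 hrpos
  have hrew : (1 + 2 / M * (ω r - ξ r)) * (M * h' r / h r)
      = (M * h' r + 2 * (ω r - ξ r) * h' r) / h r := by
    field_simp
  rw [hrew]
  exact hfinal
end

section
/- Let m ≥ 2 be an integer, T > 0, let K : [0,T] → ℝ be continuous, and let φ : (0,T] → ℝ be C¹ and satisfy φ'(t) + φ(t)²/(m−1) + K(t) ≤ 0 for all t ∈ (0,T], with t·φ(t) bounded as t → 0⁺. Let h : [0,T] → ℝ be Lipschitz with h(t) ≥ 0 for all t and h(0) = 0, and denote by h' its almost-everywhere derivative. Then h(T)²·φ(T) ≤ (m−1)·∫₀ᵀ h'(t)² dt − ∫₀ᵀ h(t)²·K(t) dt. In particular, if in addition h(T) = 0, then 0 ≤ (m−1)·∫₀ᵀ h'(t)² dt − ∫₀ᵀ h(t)²·K(t) dt. -/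
open Set MeasureTheory Filter Topology

/-!
Completing the square in the Riccati inequality gives, almost everywhere,
`(h² φ)' = 2 h h' φ + h² φ' ≤ (m - 1) h'² - h² K`.
On `[ε, T]` the function `h² φ` is absolutely continuous, so integrating yields
`h(T)² φ(T) - h(ε)² φ(ε) ≤ ∫ ε..T, ((m - 1) h'² - h² K)`.
Finally `h(ε)² φ(ε) → 0` as `ε → 0⁺`, because `|h(ε)| ≤ L ε` while `ε φ(ε)` stays bounded.
-/

theorem two_mul_mul_mul_add_sq_mul_le_of_riccati {c x x' y y' k : ℝ} (hc : 0 < c)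
    (hRic : y' + y ^ 2 / c + k ≤ 0) :
    2 * x * x' * y + x ^ 2 * y' ≤ c * x' ^ 2 - x ^ 2 * k := by
  have hy' : x ^ 2 * y' ≤ x ^ 2 * (-(y ^ 2 / c) - k) :=
    mul_le_mul_of_nonneg_left (by linarith) (sq_nonneg x)
  have hsquare : 0 ≤ (c * x' - x * y) ^ 2 / c := by positivity
  have hexpand :
      (c * x' - x * y) ^ 2 / c = c * x' ^ 2 - 2 * x * x' * y + x ^ 2 * (y ^ 2 / c) := by
    field_simp
    ring
  nlinarith

theorem AbsolutelyContinuousOnInterval.sub_le_integral_of_deriv_le {g Φ : ℝ → ℝ} {a b : ℝ}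
    (hg : AbsolutelyContinuousOnInterval g a b) (hab : a ≤ b)
    (hΦ : IntervalIntegrable Φ volume a b)
    (hle : ∀ᵐ t ∂volume.restrict (Ioo a b), deriv g t ≤ Φ t) :
    g b - g a ≤ ∫ t in a..b, Φ t := by
  rw [← hg.integral_deriv_eq_sub]
  refine intervalIntegral.integral_mono_ae_restrict hab hg.intervalIntegrable_deriv hΦ ?_
  rwa [Measure.restrict_congr_set Ioo_ae_eq_Icc] at hle

theorem absolutelyContinuousOnInterval_of_hasDerivWithinAt {f f' : ℝ → ℝ} {a b : ℝ}
    (hab : a ≤ b) (hf : ∀ t ∈ Icc a b, HasDerivWithinAt f (f' t) (Icc a b) t)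
    (hf' : ContinuousOn f' (Icc a b)) :
    AbsolutelyContinuousOnInterval f a b := by
  obtain ⟨C, hC⟩ := isCompact_Icc.exists_bound_of_continuousOn hf'
  have hLip : LipschitzOnWith C.toNNReal f (Icc a b) := by
    refine (convex_Icc a b).lipschitzOnWith_of_nnnorm_hasDerivWithin_le hf fun t ht ↦ ?_
    rw [← NNReal.coe_le_coe, coe_nnnorm, Real.coe_toNNReal']
    exact le_max_of_le_left (hC t ht)
  rw [← uIcc_of_le hab] at hLip
  exact hLip.absolutelyContinuousOnInterval

theorem LipschitzOnWith.intervalIntegrable_sq_of_ae_hasDerivAt {h h' : ℝ → ℝ} {L : NNReal}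
    {a b : ℝ} (hab : a ≤ b) (hLip : LipschitzOnWith L h (Icc a b))
    (hh' : ∀ᵐ t ∂volume.restrict (Ioo a b), HasDerivAt h (h' t) t) :
    IntervalIntegrable (fun t ↦ h' t ^ 2) volume a b := by
  rw [intervalIntegrable_iff_integrableOn_Ioo_of_le hab]
  have hmeas : AEStronglyMeasurable h' (volume.restrict (Ioo a b)) :=
    (measurable_deriv h).aestronglyMeasurable.congr <| by
      filter_upwards [hh'] with t ht using ht.deriv
  refine Integrable.mono' (integrableOn_const (C := (L : ℝ) ^ 2) measure_Ioo_lt_top.ne)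
    (hmeas.pow 2) ?_
  filter_upwards [hh', ae_restrict_mem measurableSet_Ioo] with t ht hmem
  rw [norm_pow]
  have hbound : ‖h' t‖ ≤ L := ht.le_of_lipschitzOn (Icc_mem_nhds hmem.1 hmem.2) hLip
  exact pow_le_pow_left₀ (norm_nonneg _) hbound 2

theorem sq_mul_sub_le_integral_of_riccati {c a b : ℝ} {K φ φ' h h' : ℝ → ℝ} {L : NNReal}
    (hc : 0 < c) (hab : a ≤ b) (hK : ContinuousOn K (Icc a b))
    (hφ : ∀ t ∈ Icc a b, HasDerivWithinAt φ (φ' t) (Icc a b) t)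
    (hφ' : ContinuousOn φ' (Icc a b))
    (hRic : ∀ t ∈ Ioo a b, φ' t + φ t ^ 2 / c + K t ≤ 0)
    (hLip : LipschitzOnWith L h (Icc a b))
    (hh' : ∀ᵐ t ∂volume.restrict (Ioo a b), HasDerivAt h (h' t) t) :
    h b ^ 2 * φ b - h a ^ 2 * φ a ≤ ∫ t in a..b, c * h' t ^ 2 - h t ^ 2 * K t := by
  have hhAC : AbsolutelyContinuousOnInterval h a b :=
    (uIcc_of_le hab ▸ hLip).absolutelyContinuousOnInterval
  have hgAC : AbsolutelyContinuousOnInterval (fun t ↦ h t * h t * φ t) a b :=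
    (hhAC.fun_mul hhAC).fun_mul (absolutelyContinuousOnInterval_of_hasDerivWithinAt hab hφ hφ')
  have hderiv : ∀ᵐ t ∂volume.restrict (Ioo a b),
      deriv (fun t ↦ h t * h t * φ t) t ≤ c * h' t ^ 2 - h t ^ 2 * K t := by
    filter_upwards [hh', ae_restrict_mem measurableSet_Ioo] with t ht hmem
    have hφt : HasDerivAt φ (φ' t) t :=
      (hφ t (Ioo_subset_Icc_self hmem)).hasDerivAt (Icc_mem_nhds hmem.1 hmem.2)
    calc deriv (fun t ↦ h t * h t * φ t) t
        = 2 * h t * h' t * φ t + h t ^ 2 * φ' t :=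
          ((ht.fun_mul ht).fun_mul hφt).deriv.trans (by ring)
      _ ≤ c * h' t ^ 2 - h t ^ 2 * K t :=
          two_mul_mul_mul_add_sq_mul_le_of_riccati hc (hRic t hmem)
  have hint : IntervalIntegrable (fun t ↦ c * h' t ^ 2 - h t ^ 2 * K t) volume a b :=
    ((hLip.intervalIntegrable_sq_of_ae_hasDerivAt hab hh').const_mul c).sub
      (((hLip.continuousOn.pow 2).mul hK).intervalIntegrable_of_Icc hab)
  have := hgAC.sub_le_integral_of_deriv_le hab hint hderiv
  simpa only [sq] using this

theorem tendsto_sq_mul_nhdsGT_zero {h φ : ℝ → ℝ} {L : NNReal} {s : Set ℝ}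
    (hs : s ∈ 𝓝[≥] (0 : ℝ)) (hLip : LipschitzOnWith L h s) (hzero : h 0 = 0)
    (hbdd : ∃ C : ℝ, ∀ᶠ t in 𝓝[>] 0, |t * φ t| ≤ C) :
    Tendsto (fun t ↦ h t ^ 2 * φ t) (𝓝[>] 0) (𝓝 0) := by
  obtain ⟨C, hC⟩ := hbdd
  have hs' : s ∈ 𝓝[>] (0 : ℝ) := nhdsWithin_mono _ Ioi_subset_Ici_self hs
  have h0s : (0 : ℝ) ∈ s := mem_of_mem_nhdsWithin self_mem_Ici hs
  refine squeeze_zero_norm' (a := fun t ↦ (L : ℝ) ^ 2 * C * t) ?_ ?_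
  · filter_upwards [hC, hs', self_mem_nhdsWithin] with t htC hts (htpos : 0 < t)
    have hht : |h t| ≤ L * t := by
      simpa [Real.dist_eq, hzero, abs_of_pos htpos] using hLip.dist_le_mul t hts 0 h0s
    calc ‖h t ^ 2 * φ t‖ = |h t| ^ 2 * |φ t| := by rw [Real.norm_eq_abs, abs_mul, abs_pow]
      _ ≤ (L * t) ^ 2 * |φ t| := by gcongr
      _ = L ^ 2 * t * |t * φ t| := by rw [abs_mul, abs_of_pos htpos]; ring
      _ ≤ L ^ 2 * t * C := by gcongr
      _ = L ^ 2 * C * t := by ring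
  · exact ((continuous_const.mul continuous_id).tendsto' 0 0 (by simp)).mono_left
      nhdsWithin_le_nhds

theorem le_intervalIntegral_of_forall_le_add_intervalIntegral {Φ f : ℝ → ℝ} {a b A : ℝ}
    (hab : a < b) (hΦ : IntervalIntegrable Φ volume a b) (hf : Tendsto f (𝓝[>] a) (𝓝 0))
    (hle : ∀ ε ∈ Ioo a b, A ≤ f ε + ∫ t in ε..b, Φ t) :
    A ≤ ∫ t in a..b, Φ t := by
  have hΦIcc : IntegrableOn Φ (uIcc a b) := by
    rw [uIcc_of_le hab.le, integrableOn_Icc_iff_integrableOn_Ioc]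
    exact hΦ.1
  have hprimitive : Tendsto (fun ε ↦ ∫ t in ε..b, Φ t) (𝓝[>] a) (𝓝 (∫ t in a..b, Φ t)) := by
    have := intervalIntegral.continuousOn_primitive_interval_left hΦIcc a left_mem_uIcc
    rw [uIcc_of_le hab.le, continuousWithinAt_Icc_iff_Ici hab] at this
    exact (this.mono Ioi_subset_Ici_self).tendsto
  simpa using ge_of_tendsto (hf.add hprimitive) (eventually_of_mem (Ioo_mem_nhdsGT hab) hle)

theorem stmt_5_general
    (m : ℕ) (hm : 2 ≤ m)
    (T : ℝ) (hT : 0 < T)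
    (K : ℝ → ℝ) (hKcont : ContinuousOn K (Set.Icc 0 T))
    (φ φ' : ℝ → ℝ)
    (hφderiv : ∀ t ∈ Set.Ioc (0:ℝ) T, HasDerivWithinAt φ (φ' t) (Set.Ioc 0 T) t)
    (hφ'cont : ContinuousOn φ' (Set.Ioc 0 T))
    (hRiccati : ∀ t ∈ Set.Ioc (0:ℝ) T,
      φ' t + φ t ^ 2 / ((m : ℝ) - 1) + K t ≤ 0)
    (hbdd : ∃ C : ℝ, ∀ᶠ t in nhdsWithin 0 (Set.Ioi 0), |t * φ t| ≤ C)
    (L : NNReal) (h : ℝ → ℝ)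
    (hLip : LipschitzOnWith L h (Set.Icc 0 T))
    (hzero : h 0 = 0)
    (h' : ℝ → ℝ)
    (hh' : ∀ᵐ t ∂(MeasureTheory.volume.restrict (Set.Ioo 0 T)),
      HasDerivAt h (h' t) t) :
    (h T ^ 2 * φ T ≤ ((m : ℝ) - 1) * (∫ t in (0:ℝ)..T, h' t ^ 2)
        - ∫ t in (0:ℝ)..T, h t ^ 2 * K t) ∧
    (h T = 0 → 0 ≤ ((m : ℝ) - 1) * (∫ t in (0:ℝ)..T, h' t ^ 2)
        - ∫ t in (0:ℝ)..T, h t ^ 2 * K t) := by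
  have hc : (0 : ℝ) < m - 1 := by
    have : (2 : ℝ) ≤ m := by exact_mod_cast hm
    linarith
  have hsq := hLip.intervalIntegrable_sq_of_ae_hasDerivAt hT.le hh'
  have hhK : IntervalIntegrable (fun t ↦ h t ^ 2 * K t) volume 0 T :=
    ((hLip.continuousOn.pow 2).mul hKcont).intervalIntegrable_of_Icc hT.le
  have hstep : ∀ ε ∈ Ioo 0 T, h T ^ 2 * φ T ≤
      h ε ^ 2 * φ ε + ∫ t in ε..T, ((m : ℝ) - 1) * h' t ^ 2 - h t ^ 2 * K t := by
    intro ε hε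
    have hsub : Icc ε T ⊆ Ioc 0 T := Icc_subset_Ioc hε.1 le_rfl
    have hsub₀ : Icc ε T ⊆ Icc 0 T := Icc_subset_Icc hε.1.le le_rfl
    have := sq_mul_sub_le_integral_of_riccati hc hε.2.le (hKcont.mono hsub₀)
      (fun t ht ↦ (hφderiv t (hsub ht)).mono hsub) (hφ'cont.mono hsub)
      (fun t ht ↦ hRiccati t (hsub (Ioo_subset_Icc_self ht))) (hLip.mono hsub₀)
      (ae_restrict_of_ae_restrict_of_subset (Ioo_subset_Ioo_left hε.1.le) hh')
    linarith
  have hmain := le_intervalIntegral_of_forall_le_add_intervalIntegral hT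
    ((hsq.const_mul _).sub hhK) (tendsto_sq_mul_nhdsGT_zero (Icc_mem_nhdsGE hT) hLip hzero hbdd)
    hstep
  rw [intervalIntegral.integral_sub (hsq.const_mul _) hhK,
    intervalIntegral.integral_const_mul] at hmain
  exact ⟨hmain, fun hT0 ↦ by simpa [hT0] using hmain⟩

theorem stmt_5
    (m : ℕ) (hm : 2 ≤ m)
    (T : ℝ) (hT : 0 < T)
    (K : ℝ → ℝ) (hKcont : ContinuousOn K (Set.Icc 0 T))
    (φ φ' : ℝ → ℝ)
    (hφderiv : ∀ t ∈ Set.Ioc (0:ℝ) T, HasDerivWithinAt φ (φ' t) (Set.Ioc 0 T) t)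
    (hφ'cont : ContinuousOn φ' (Set.Ioc 0 T))
    (hRiccati : ∀ t ∈ Set.Ioc (0:ℝ) T,
      φ' t + φ t ^ 2 / ((m : ℝ) - 1) + K t ≤ 0)
    (hbdd : ∃ C : ℝ, ∀ᶠ t in nhdsWithin 0 (Set.Ioi 0), |t * φ t| ≤ C)
    (L : NNReal) (h : ℝ → ℝ)
    (hLip : LipschitzOnWith L h (Set.Icc 0 T))
    (hnonneg : ∀ t ∈ Set.Icc (0:ℝ) T, 0 ≤ h t)
    (hzero : h 0 = 0)
    (h' : ℝ → ℝ)
    (hh' : ∀ᵐ t ∂(MeasureTheory.volume.restrict (Set.Ioo 0 T)),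
      HasDerivAt h (h' t) t) :
    (h T ^ 2 * φ T ≤ ((m : ℝ) - 1) * (∫ t in (0:ℝ)..T, h' t ^ 2)
        - ∫ t in (0:ℝ)..T, h t ^ 2 * K t) ∧
    (h T = 0 → 0 ≤ ((m : ℝ) - 1) * (∫ t in (0:ℝ)..T, h' t ^ 2)
        - ∫ t in (0:ℝ)..T, h t ^ 2 * K t) :=
  stmt_5_general m hm T hT K hKcont φ φ' hφderiv hφ'cont hRiccati hbdd L h hLip hzero h' hh'
end

section
/- Let I ⊆ ℝ be an open interval with 0 ∈ I, let m ≥ 2 be an integer, a ∈ ℝ, and let g : I → ℝ be smooth with g(t) > 0 for all t ∈ I. Suppose f, λ : I → ℝ are smooth and satisfy the system f'(t)·g'(t)/g(t) = λ(t) + (m−1)·(g'(t)/g(t))² + g''(t)/g(t) + (m−1)·a/g(t)² and f''(t) = λ(t) + m·g''(t)/g(t) for all t ∈ I. Then there exist constants A, B ∈ ℝ (namely A = f'(0)/g(0) and B = f(0)) such that for all t ∈ I: f(t) = B + ∫₀ᵗ g(s)·[A + (m−1)·∫₀ˢ (g''(x)g(x) − g'(x)² − a)/g(x)³ dx] ds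 and λ(t) = −(m−1)·(g'(t)² + a)/g(t)² − g''(t)/g(t) + g'(t)·[A + (m−1)·∫₀ᵗ (g''(x)g(x) − g'(x)² − a)/g(x)³ dx]. -/
/-!
Subtracting the two equations eliminates `λ` and leaves a first-order equation for `f'/g`:
`(f'/g)' = (f''g - f'g')/g² = (m-1)(g''g - g'² - a)/g³`. Integrating it from `0` gives
`f'/g = A + (m-1)∫₀ᵗ (g''g - g'² - a)/g³`; integrating `f' = g · (f'/g)` once more gives `f`,
and substituting `f'` into the first equation gives `λ`.
-/

open intervalIntegral

theorem Set.OrdConnected.integral_eq_sub_of_hasDerivAt {E : Type*} [NormedAddCommGroup E]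
    [NormedSpace ℝ E] [CompleteSpace E] {I : Set ℝ} (hI : I.OrdConnected) {F F' : ℝ → E}
    (hF : ∀ t ∈ I, HasDerivAt F (F' t) t) (hF' : ContinuousOn F' I) {x y : ℝ}
    (hx : x ∈ I) (hy : y ∈ I) :
    ∫ t in x..y, F' t = F y - F x :=
  have hsub : Set.uIcc x y ⊆ I := hI.uIcc_subset hx hy
  intervalIntegral.integral_eq_sub_of_hasDerivAt (fun t ht => hF t (hsub ht))
    (hF'.mono hsub).intervalIntegrable

theorem soliton_system_quotient_deriv {m a g g' g'' f' f'' lam : ℝ} (hg : g ≠ 0)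
    (h1 : f' * g' / g = lam + (m - 1) * (g' / g) ^ 2 + g'' / g + (m - 1) * a / g ^ 2)
    (h2 : f'' = lam + m * g'' / g) :
    (f'' * g - f' * g') / g ^ 2 = (m - 1) * ((g'' * g - g' ^ 2 - a) / g ^ 3) := by
  subst h2
  field_simp at h1 ⊢
  linear_combination -h1

theorem soliton_system_lam_eq {m a g g' g'' f' K lam : ℝ} (hg : g ≠ 0) (hf' : f' = g * K)
    (h1 : f' * g' / g = lam + (m - 1) * (g' / g) ^ 2 + g'' / g + (m - 1) * a / g ^ 2) :
    lam = -(m - 1) * (g' ^ 2 + a) / g ^ 2 - g'' / g + g' * K := by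
  subst hf'
  field_simp at h1 ⊢
  linear_combination -h1

theorem stmt_13_general
    (I : Set ℝ) (hIconn : Set.OrdConnected I)
    (h0I : (0:ℝ) ∈ I)
    (m : ℕ) (a : ℝ)
    (g g' g'' : ℝ → ℝ)
    (hgderiv : ∀ t ∈ I, HasDerivAt g (g' t) t)
    (hg'deriv : ∀ t ∈ I, HasDerivAt g' (g'' t) t)
    (hg''cont : ContinuousOn g'' I)
    (hgpos : ∀ t ∈ I, 0 < g t)
    (f f' f'' lam : ℝ → ℝ)
    (hfderiv : ∀ t ∈ I, HasDerivAt f (f' t) t)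
    (hf'deriv : ∀ t ∈ I, HasDerivAt f' (f'' t) t)
    (heq1 : ∀ t ∈ I, f' t * g' t / g t
      = lam t + ((m : ℝ) - 1) * (g' t / g t) ^ 2 + g'' t / g t
        + ((m : ℝ) - 1) * a / g t ^ 2)
    (heq2 : ∀ t ∈ I, f'' t = lam t + (m : ℝ) * g'' t / g t) :
    ∀ t ∈ I,
      f t = f 0 + (∫ s in (0:ℝ)..t, g s * (f' 0 / g 0
          + ((m : ℝ) - 1) * ∫ x in (0:ℝ)..s,
              (g'' x * g x - g' x ^ 2 - a) / g x ^ 3)) ∧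
      lam t = -((m : ℝ) - 1) * (g' t ^ 2 + a) / g t ^ 2 - g'' t / g t
          + g' t * (f' 0 / g 0
            + ((m : ℝ) - 1) * ∫ x in (0:ℝ)..t,
                (g'' x * g x - g' x ^ 2 - a) / g x ^ 3) := by
  set φ : ℝ → ℝ := fun x => (g'' x * g x - g' x ^ 2 - a) / g x ^ 3
  have hgcont : ContinuousOn g I := fun t ht => (hgderiv t ht).continuousAt.continuousWithinAt
  have hg'cont : ContinuousOn g' I := fun t ht => (hg'deriv t ht).continuousAt.continuousWithinAt
  have hf'cont : ContinuousOn f' I := fun t ht => (hf'deriv t ht).continuousAt.continuousWithinAt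
  have hφcont : ContinuousOn φ I :=
    (((hg''cont.mul hgcont).sub (hg'cont.pow 2)).sub continuousOn_const).div (hgcont.pow 3)
      fun t ht => pow_ne_zero 3 (hgpos t ht).ne'
  have hquot (t : ℝ) (ht : t ∈ I) : HasDerivAt (fun t => f' t / g t) ((m - 1) * φ t) t :=
    ((hf'deriv t ht).div (hgderiv t ht) (hgpos t ht).ne').congr_deriv
      (soliton_system_quotient_deriv (hgpos t ht).ne' (heq1 t ht) (heq2 t ht))
  have hf'_eq (s : ℝ) (hs : s ∈ I) : f' s = g s * (f' 0 / g 0 + (m - 1) * ∫ x in 0..s, φ x) := by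
    have h := hIconn.integral_eq_sub_of_hasDerivAt hquot (continuousOn_const.mul hφcont) h0I hs
    rw [integral_const_mul] at h
    rw [h, add_sub_cancel, mul_div_cancel₀ _ (hgpos s hs).ne']
  intro t ht
  refine ⟨?_, soliton_system_lam_eq (hgpos t ht).ne' (hf'_eq t ht) (heq1 t ht)⟩
  rw [integral_congr fun s hs => (hf'_eq s (hIconn.uIcc_subset h0I ht hs)).symm,
    hIconn.integral_eq_sub_of_hasDerivAt hfderiv hf'cont h0I ht, add_sub_cancel]

theorem stmt_13
    (I : Set ℝ) (hIopen : IsOpen I) (hIconn : Set.OrdConnected I)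
    (h0I : (0:ℝ) ∈ I)
    (m : ℕ) (hm : 2 ≤ m) (a : ℝ)
    (g g' g'' : ℝ → ℝ)
    (hgderiv : ∀ t ∈ I, HasDerivAt g (g' t) t)
    (hg'deriv : ∀ t ∈ I, HasDerivAt g' (g'' t) t)
    (hg''cont : ContinuousOn g'' I)
    (hgpos : ∀ t ∈ I, 0 < g t)
    (f f' f'' lam : ℝ → ℝ)
    (hfderiv : ∀ t ∈ I, HasDerivAt f (f' t) t)
    (hf'deriv : ∀ t ∈ I, HasDerivAt f' (f'' t) t)
    (hf''cont : ContinuousOn f'' I)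
    (heq1 : ∀ t ∈ I, f' t * g' t / g t
      = lam t + ((m : ℝ) - 1) * (g' t / g t) ^ 2 + g'' t / g t
        + ((m : ℝ) - 1) * a / g t ^ 2)
    (heq2 : ∀ t ∈ I, f'' t = lam t + (m : ℝ) * g'' t / g t) :
    ∀ t ∈ I,
      f t = f 0 + (∫ s in (0:ℝ)..t, g s * (f' 0 / g 0
          + ((m : ℝ) - 1) * ∫ x in (0:ℝ)..s,
              (g'' x * g x - g' x ^ 2 - a) / g x ^ 3)) ∧
      lam t = -((m : ℝ) - 1) * (g' t ^ 2 + a) / g t ^ 2 - g'' t / g t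
          + g' t * (f' 0 / g 0
            + ((m : ℝ) - 1) * ∫ x in (0:ℝ)..t,
                (g'' x * g x - g' x ^ 2 - a) / g x ^ 3) :=
  stmt_13_general I hIconn h0I m a g g' g'' hgderiv hg'deriv hg''cont hgpos f f' f'' lam hfderiv
    hf'deriv heq1 heq2
end
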